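/- An infinite matrix A = (a_{nk}) of real numbers maps ℓ∞(F) into ℓ∞(F) (i.e., for every bounded sequence û of triangular fuzzy numbers, A û is defined and bounded) if and only if sup_n Σ_k d̄(a_{nk}·δₖ, θ) < ∞, equivalently sup_n Σ_k |a_{nk}| < ∞. -/

import Mathlib

open scoped ENNReal

/-- The distance `d̄(u,v) = max {|u - v - t₁|, |u - v|, |u - v + t₂|}`. -/
def dbar (t₁ t₂ u v : ℝ) : ℝ := max |u - v - t₁| (max |u - v| |u - v + t₂|)

/-- `ℓ∞(F)`: bounded sequences of triangular fuzzy numbers (via middle points). -/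
def linfF (t₁ t₂ : ℝ) : Set (ℕ → ℝ) := {u | ∃ M : ℝ, ∀ k, dbar t₁ t₂ (u k) 0 ≤ M}

/-!
Membership in `ℓ∞(F)` is plain boundedness of the middle points, since
`|x| ≤ d̄(x, θ) ≤ |x| + |t₁| + |t₂|`. Sufficiency of the row condition is then the estimate
`|Σ_k a_{nk} u_k| ≤ (Σ_k |a_{nk}|) · sup_k |u_k|`. For necessity, testing against the sign
sequence of a row shows that each row is absolutely summable, so each row is a continuous
functional on `ℓ∞` of norm at least `Σ_k |a_{nk}|`; these functionals are pointwise bounded by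
hypothesis, and the uniform boundedness principle bounds their norms uniformly.
-/

lemma abs_le_dbar (t₁ t₂ x : ℝ) : |x| ≤ dbar t₁ t₂ x 0 := by
  simp only [dbar, sub_zero]
  exact le_max_of_le_right (le_max_left _ _)

lemma dbar_le_abs_add (t₁ t₂ x : ℝ) : dbar t₁ t₂ x 0 ≤ |x| + (|t₁| + |t₂|) := by
  simp only [dbar, sub_zero]
  have h₁ : |x - t₁| ≤ |x| + |t₁| := abs_sub _ _
  have h₂ : |x + t₂| ≤ |x| + |t₂| := abs_add_le _ _
  refine max_le (by linarith [abs_nonneg t₂]) (max_le ?_ (by linarith [abs_nonneg t₁]))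
  linarith [abs_nonneg t₁, abs_nonneg t₂]

lemma mem_linfF_iff {t₁ t₂ : ℝ} {u : ℕ → ℝ} : u ∈ linfF t₁ t₂ ↔ ∃ B, ∀ k, |u k| ≤ B := by
  constructor
  · rintro ⟨M, hM⟩
    exact ⟨M, fun k => (abs_le_dbar t₁ t₂ (u k)).trans (hM k)⟩
  · rintro ⟨B, hB⟩
    exact ⟨B + (|t₁| + |t₂|), fun k => (dbar_le_abs_add t₁ t₂ (u k)).trans (by linarith [hB k])⟩

lemma abs_sign_le_one (x : ℝ) : |(SignType.sign x : ℝ)| ≤ 1 := by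
  rcases SignType.sign x with _ | _ | _ <;> simp

section WeightedSums

variable {ι : Type*} {a u : ι → ℝ} {B : ℝ}

lemma summable_mul_of_abs_le (ha : Summable fun k => |a k|) (hu : ∀ k, |u k| ≤ B) :
    Summable fun k => a k * u k :=
  (ha.mul_right B).of_norm_bounded fun k => by
    rw [Real.norm_eq_abs, abs_mul]
    exact mul_le_mul_of_nonneg_left (hu k) (abs_nonneg _)

lemma abs_tsum_mul_le (ha : Summable fun k => |a k|) (hu : ∀ k, |u k| ≤ B) :
    |∑' k, a k * u k| ≤ (∑' k, |a k|) * B :=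
  tsum_of_norm_bounded (ha.hasSum.mul_right B) fun k => by
    rw [Real.norm_eq_abs, abs_mul]
    exact mul_le_mul_of_nonneg_left (hu k) (abs_nonneg _)

lemma summable_abs_of_summable_mul_sign (h : Summable fun k => a k * SignType.sign (a k)) :
    Summable fun k => |a k| := by
  simpa only [self_mul_sign] using h

end WeightedSums

section RowFunctional

variable {ι : Type*}

lemma abs_apply_le_norm_linfty (u : lp (fun _ : ι => ℝ) ∞) (k : ι) : |u k| ≤ ‖u‖ :=
  lp.norm_apply_le_norm ENNReal.top_ne_zero u k

noncomputable def rowFunctional (a : ι → ℝ) (ha : Summable fun k => |a k|) :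
    lp (fun _ : ι => ℝ) ∞ →L[ℝ] ℝ :=
  LinearMap.mkContinuous
    { toFun := fun u => ∑' k, a k * u k
      map_add' := fun u v => by
        simp only [lp.coeFn_add, Pi.add_apply, mul_add]
        exact (summable_mul_of_abs_le ha (abs_apply_le_norm_linfty u)).tsum_add
          (summable_mul_of_abs_le ha (abs_apply_le_norm_linfty v))
      map_smul' := fun c u => by
        simp only [lp.coeFn_smul, Pi.smul_apply, smul_eq_mul, RingHom.id_apply, mul_left_comm _ c]
        exact tsum_mul_left }
    (∑' k, |a k|) fun u => abs_tsum_mul_le ha (abs_apply_le_norm_linfty u)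

lemma rowFunctional_apply (a : ι → ℝ) (ha : Summable fun k => |a k|)
    (u : lp (fun _ : ι => ℝ) ∞) : rowFunctional a ha u = ∑' k, a k * u k :=
  rfl

noncomputable def signLinfty (a : ι → ℝ) : lp (fun _ : ι => ℝ) ∞ :=
  ⟨fun k => SignType.sign (a k), memℓp_infty ⟨1, by rintro _ ⟨k, rfl⟩; exact abs_sign_le_one _⟩⟩

lemma norm_signLinfty_le_one (a : ι → ℝ) : ‖signLinfty a‖ ≤ 1 :=
  lp.norm_le_of_forall_le zero_le_one fun k => abs_sign_le_one (a k)

lemma tsum_abs_le_norm_rowFunctional (a : ι → ℝ) (ha : Summable fun k => |a k|) :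
    ∑' k, |a k| ≤ ‖rowFunctional a ha‖ :=
  calc ∑' k, |a k| = rowFunctional a ha (signLinfty a) := by
        simp only [rowFunctional_apply, signLinfty, self_mul_sign]
    _ ≤ ‖rowFunctional a ha (signLinfty a)‖ := le_abs_self _
    _ ≤ ‖rowFunctional a ha‖ * ‖signLinfty a‖ := (rowFunctional a ha).le_opNorm _
    _ ≤ ‖rowFunctional a ha‖ := mul_le_of_le_one_right (norm_nonneg _) (norm_signLinfty_le_one a)

lemma exists_tsum_abs_le_of_pointwise_bounded {κ : Type*} (a : κ → ι → ℝ)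
    (ha : ∀ n, Summable fun k => |a n k|)
    (hbdd : ∀ u : lp (fun _ : ι => ℝ) ∞, ∃ C, ∀ n, |∑' k, a n k * u k| ≤ C) :
    ∃ M, ∀ n, ∑' k, |a n k| ≤ M := by
  obtain ⟨M, hM⟩ := banach_steinhaus (g := fun n => rowFunctional (a n) (ha n)) hbdd
  exact ⟨M, fun n => (tsum_abs_le_norm_rowFunctional (a n) (ha n)).trans (hM n)⟩

end RowFunctional

theorem matrix_linf_to_linf_general (t₁ t₂ : ℝ) (a : ℕ → ℕ → ℝ) :
    (∀ u ∈ linfF t₁ t₂, (∀ n, Summable fun k => a n k * u k) ∧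
      (fun n => ∑' k, a n k * u k) ∈ linfF t₁ t₂) ↔
    (∃ M : ℝ, ∀ n, (Summable fun k => |a n k|) ∧ (∑' k, |a n k|) ≤ M) := by
  constructor
  · intro H
    have hrow : ∀ n, Summable fun k => |a n k| := fun n =>
      summable_abs_of_summable_mul_sign <|
        (H _ (mem_linfF_iff.2 ⟨1, fun k => abs_sign_le_one (a n k)⟩)).1 n
    have hbdd (u : lp (fun _ : ℕ => ℝ) ∞) : ∃ C, ∀ n, |∑' k, a n k * u k| ≤ C :=
      mem_linfF_iff.1 (H u (mem_linfF_iff.2 ⟨‖u‖, abs_apply_le_norm_linfty u⟩)).2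
    obtain ⟨M, hM⟩ := exists_tsum_abs_le_of_pointwise_bounded a hrow hbdd
    exact ⟨M, fun n => ⟨hrow n, hM n⟩⟩
  · rintro ⟨M, hM⟩ u hu
    obtain ⟨B, hB⟩ := mem_linfF_iff.1 hu
    have hB₀ : 0 ≤ B := (abs_nonneg _).trans (hB 0)
    refine ⟨fun n => summable_mul_of_abs_le (hM n).1 hB, mem_linfF_iff.2 ⟨M * B, fun n => ?_⟩⟩
    exact (abs_tsum_mul_le (hM n).1 hB).trans (mul_le_mul_of_nonneg_right (hM n).2 hB₀)

/-- `A ∈ (ℓ∞(F) : ℓ∞(F))` if and only if `sup_n Σ_k |a_{nk}| < ∞`. -/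
theorem matrix_linf_to_linf (t₁ t₂ : ℝ) (h : t₁ ≤ t₂) (a : ℕ → ℕ → ℝ) :
    (∀ u ∈ linfF t₁ t₂, (∀ n, Summable fun k => a n k * u k) ∧
      (fun n => ∑' k, a n k * u k) ∈ linfF t₁ t₂) ↔
    (∃ M : ℝ, ∀ n, (Summable fun k => |a n k|) ∧ (∑' k, |a n k|) ≤ M) :=
  matrix_linf_to_linf_general t₁ t₂ a
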